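/- Let F be a {*}-formula over a field K all of whose input tensors have dimension at least 2, computing a tensor of order (n_1,…,n_k), and let n be the maximum of the maximal orders of the input tensors of F. Then for every index tuple e ∈ [n_1]×…×[n_k] there exists a skew arithmetic circuit of size at most 2·n³·|F| computing the entry F[e]. -/

import Mathlib

namespace TC

/-- An entry of an input tensor: an element of `K` or a variable. -/
inductive Entry (K : Type) where
  | const : K → Entry K
  | var : ℕ → Entry K

noncomputable def Entry.toPoly {K : Type} [CommSemiring K] : Entry K → MvPolynomial ℕ K
  | .const c => MvPolynomial.C c
  | .var n => MvPolynomial.X n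

/-- The index set of a tensor of order `ns`. -/
def Idx : List ℕ → Type
  | [] => PUnit
  | n :: ns => Fin n × Idx ns

def Idx.cast {xs ys : List ℕ} (h : xs = ys) (e : Idx xs) : Idx ys := h ▸ e

def Idx.app : (xs : List ℕ) → {ys : List ℕ} → Idx xs → Idx ys → Idx (xs ++ ys)
  | [], _, _, f => f
  | _ :: xs, _, e, f => (e.1, Idx.app xs e.2 f)

def Idx.split : (xs : List ℕ) → {ys : List ℕ} → Idx (xs ++ ys) → Idx xs × Idx ys
  | [], _, e => (PUnit.unit, e)
  | _ :: xs, _, e => ((e.1, (Idx.split xs e.2).1), (Idx.split xs e.2).2)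

/-- A tensor over `R`: an order `(n_1, …, n_k)` together with an entry map. -/
structure Tens (R : Type) where
  order : List ℕ
  entry : Idx order → R

/-- Number of entries of a tensor. -/
def Tens.tsize {R} (T : Tens R) : ℕ := T.order.prod

/-- Dimension of a tensor. -/
def Tens.dim {R} (T : Tens R) : ℕ := T.order.length

/-- Maximal order of a tensor. -/
def Tens.maxOrder {R} (T : Tens R) : ℕ := T.order.foldr max 0

/-- `T` and `G` can be contracted: last order of `T` equals first order of `G`. -/
def Tens.Compatible {R} (T G : Tens R) : Prop :=
  T.order ≠ [] ∧ G.order ≠ [] ∧ T.order.getLast? = G.order.head?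

/-- Contraction `T * G` on the last dimension of `T` and the first dimension of `G`
(returning a junk scalar tensor when the orders are incompatible). -/
def Tens.contr {R : Type} [CommSemiring R] (T G : Tens R) : Tens R :=
  match hT : T.order.getLast?, hG : G.order with
  | some c, c' :: ms =>
      if hc : c' = c then
        { order := T.order.dropLast ++ ms
          entry := fun e =>
            let p := Idx.split T.order.dropLast e
            ∑ i : Fin c,
              T.entry (Idx.cast
                (show T.order.dropLast ++ [c] = T.order by
                  have hne : T.order ≠ [] := by
                    intro h; rw [h] at hT; simp at hT
                  have : T.order.getLast hne = c := by
                    have := List.getLast?_eq_getLast hne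
                    rw [this] at hT
                    exact (Option.some.injEq _ _).mp hT
                  rw [← this]
                  exact List.dropLast_append_getLast hne)
                (Idx.app T.order.dropLast p.1 ((i, PUnit.unit) : Idx [c]))) *
              G.entry (Idx.cast
                (show c :: ms = G.order by rw [hG, hc])
                ((i, p.2) : Idx (c :: ms))) }
      else ⟨[], fun _ => 0⟩
  | _, _ => ⟨[], fun _ => 0⟩

end TC

namespace TC

/-- Insert a coordinate value at position `i`, recovering an index for order `l`
from an index for `l.eraseIdx i`. -/
def Idx.insertAt : (l : List ℕ) → (i : Fin l.length) → Fin (l.get i) →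
    Idx (l.eraseIdx i.val) → Idx l
  | _ :: _, ⟨0, _⟩, r, e => (r, e)
  | _ :: l, ⟨i + 1, h⟩, r, e =>
      (e.1, Idx.insertAt l ⟨i, by simpa using Nat.lt_of_succ_lt_succ h⟩ r e.2)

/-- The contraction `T *_{i,j} G` on dimension `i` of `T` and dimension `j` of `G`
(0-based; returns a junk scalar tensor when incompatible). -/
noncomputable def Tens.contrIJ {R : Type} [CommSemiring R] (T G : Tens R) (i j : ℕ) : Tens R :=
  if h : ∃ (hi : i < T.order.length) (hj : j < G.order.length),
      T.order.get ⟨i, hi⟩ = G.order.get ⟨j, hj⟩ then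
    { order := T.order.eraseIdx i ++ G.order.eraseIdx j
      entry := fun e =>
        let hi := h.choose
        let hj := h.choose_spec.choose
        let hc := h.choose_spec.choose_spec
        let p := Idx.split (T.order.eraseIdx i) e
        ∑ r : Fin (T.order.get ⟨i, hi⟩),
          T.entry (Idx.insertAt T.order ⟨i, hi⟩ r p.1) *
          G.entry (Idx.insertAt G.order ⟨j, hj⟩ (Fin.cast hc r) p.2) }
  else ⟨[], fun _ => 0⟩

/-- `{*}`-formulas: leaves are input tensors with entries in `K` or variables,
internal nodes are contractions `*`. -/
inductive SForm (K : Type) where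
  | input : Tens (Entry K) → SForm K
  | contr : SForm K → SForm K → SForm K

variable {K : Type} [Field K]

/-- The tensor computed by a `{*}`-formula. -/
noncomputable def SForm.eval : SForm K → Tens (MvPolynomial ℕ K)
  | .input T => ⟨T.order, fun e => (T.entry e).toPoly⟩
  | .contr F G => (F.eval).contr G.eval

/-- Well-formedness: at every `*`-node the orders match. -/
def SForm.WF : SForm K → Prop
  | .input _ => True
  | .contr F G => F.WF ∧ G.WF ∧ F.eval.Compatible G.eval

/-- Size of a `{*}`-formula: number of `*`-nodes plus sizes of the input tensors. -/
def SForm.size : SForm K → ℕ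
  | .input T => T.tsize
  | .contr F G => F.size + G.size + 1

/-- Dimension of the tensor computed by the formula. -/
noncomputable def SForm.dim (F : SForm K) : ℕ := F.eval.dim

/-- Maximal dimension over all nodes of the formula. -/
noncomputable def SForm.maxdim : SForm K → ℕ
  | .input T => T.dim
  | .contr F G => max ((F.eval.contr G.eval).dim) (max F.maxdim G.maxdim)

/-- Input dimension: maximal dimension of an input tensor. -/
def SForm.inputDim : SForm K → ℕ
  | .input T => T.dim
  | .contr F G => max F.inputDim G.inputDim

/-- Maximum of the maximal orders of the input tensors. -/
def SForm.inputMaxOrder : SForm K → ℕ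
  | .input T => T.maxOrder
  | .contr F G => max F.inputMaxOrder G.inputMaxOrder

/-- All input tensors have dimension at least 2. -/
def SForm.InputsDimGE2 : SForm K → Prop
  | .input T => 2 ≤ T.dim
  | .contr F G => F.InputsDimGE2 ∧ G.InputsDimGE2

/-- A formula of dimension `k` and input dimension `p` is tame if
`maxdim ≤ max k p`. -/
noncomputable def SForm.Tame (F : SForm K) : Prop := F.maxdim ≤ max F.dim F.inputDim

/-- Every subformula is tame. -/
noncomputable def SForm.TotallyTame : SForm K → Prop
  | .input T => (SForm.input T : SForm K).Tame
  | .contr F G => (SForm.contr F G).Tame ∧ F.TotallyTame ∧ G.TotallyTame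

/-- The tensor computed by `F` has a single entry, equal to the polynomial `f`. -/
noncomputable def SForm.ComputesPoly (F : SForm K) (f : MvPolynomial ℕ K) : Prop :=
  F.eval.tsize = 1 ∧ ∀ e, F.eval.entry e = f

/-- `{*_{i,j}}`-formulas: internal nodes carry the pair of contracted dimensions
(0-based). -/
inductive IForm (K : Type) where
  | input : Tens (Entry K) → IForm K
  | contr : ℕ → ℕ → IForm K → IForm K → IForm K

noncomputable def IForm.eval : IForm K → Tens (MvPolynomial ℕ K)
  | .input T => ⟨T.order, fun e => (T.entry e).toPoly⟩
  | .contr i j F G => (F.eval).contrIJ G.eval i j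

def IForm.WF : IForm K → Prop
  | .input _ => True
  | .contr i j F G => F.WF ∧ G.WF ∧
      ∃ (hi : i < F.eval.order.length) (hj : j < G.eval.order.length),
        F.eval.order.get ⟨i, hi⟩ = G.eval.order.get ⟨j, hj⟩

def IForm.size : IForm K → ℕ
  | .input T => T.tsize
  | .contr _ _ F G => F.size + G.size + 1

noncomputable def IForm.dim (F : IForm K) : ℕ := F.eval.dim

noncomputable def IForm.maxdim : IForm K → ℕ
  | .input T => T.dim
  | .contr i j F G => max ((F.eval.contrIJ G.eval i j).dim) (max F.maxdim G.maxdim)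

def IForm.inputDim : IForm K → ℕ
  | .input T => T.dim
  | .contr _ _ F G => max F.inputDim G.inputDim

noncomputable def IForm.Tame (F : IForm K) : Prop := F.maxdim ≤ max F.dim F.inputDim

noncomputable def IForm.TotallyTame : IForm K → Prop
  | .input T => (IForm.input T : IForm K).Tame
  | .contr i j F G => (IForm.contr i j F G).Tame ∧ F.TotallyTame ∧ G.TotallyTame

noncomputable def IForm.ComputesPoly (F : IForm K) (f : MvPolynomial ℕ K) : Prop :=
  F.eval.tsize = 1 ∧ ∀ e, F.eval.entry e = f

end TC

namespace TC

/-- A gate of an arithmetic circuit: an input (constant or variable) or a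
computation gate with the indices of its two children. -/
inductive Gate (K : Type) where
  | const : K → Gate K
  | var : ℕ → Gate K
  | add : ℕ → ℕ → Gate K
  | mul : ℕ → ℕ → Gate K

def Gate.children {K} : Gate K → List ℕ
  | .add j k => [j, k]
  | .mul j k => [j, k]
  | _ => []

def Gate.IsInput {K} : Gate K → Prop
  | .const _ => True
  | .var _ => True
  | _ => False

/-- An arithmetic circuit: a DAG of gates (children point to smaller indices,
which is equivalent to acyclicity) with a distinguished output gate. -/
structure Circuit (K : Type) where
  size : ℕ
  gate : Fin size → Gate K
  output : Fin size
  wf : ∀ i : Fin size, ∀ j ∈ (gate i).children, j < i.val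

/-- The polynomial computed by a gate of the circuit. -/
noncomputable def Circuit.eval {K : Type} [Field K] (C : Circuit K) :
    Fin C.size → MvPolynomial ℕ K
  | i =>
    match h : C.gate i with
    | .const c => MvPolynomial.C c
    | .var n => MvPolynomial.X n
    | .add j k =>
        have hj : j < i.val := C.wf i j (by rw [h]; simp [Gate.children])
        have hk : k < i.val := C.wf i k (by rw [h]; simp [Gate.children])
        C.eval ⟨j, hj.trans i.isLt⟩ + C.eval ⟨k, hk.trans i.isLt⟩
    | .mul j k =>
        have hj : j < i.val := C.wf i j (by rw [h]; simp [Gate.children])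
        have hk : k < i.val := C.wf i k (by rw [h]; simp [Gate.children])
        C.eval ⟨j, hj.trans i.isLt⟩ * C.eval ⟨k, hk.trans i.isLt⟩
  termination_by i => i.val

/-- The circuit computes `f` if its output gate computes `f`. -/
noncomputable def Circuit.Computes {K : Type} [Field K] (C : Circuit K)
    (f : MvPolynomial ℕ K) : Prop :=
  C.eval C.output = f

/-- `a` is a child of `b`. -/
def Circuit.Child {K} (C : Circuit K) (a b : Fin C.size) : Prop :=
  a.val ∈ (C.gate b).children

/-- The set of gates of the subcircuit rooted at `i`. -/
def Circuit.Subgates {K} (C : Circuit K) (i : Fin C.size) : Set (Fin C.size) :=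
  {j | Relation.ReflTransGen C.Child j i}

/-- Multiplicatively disjoint: the subcircuits rooted at the two children of any
`×`-gate are disjoint. -/
def Circuit.MultDisjoint {K} (C : Circuit K) : Prop :=
  ∀ i : Fin C.size, ∀ j k : ℕ, C.gate i = .mul j k →
    ∀ (hj : j < C.size) (hk : k < C.size),
      Disjoint (C.Subgates ⟨j, hj⟩) (C.Subgates ⟨k, hk⟩)

/-- Skew: every `×`-gate has at least one child which is an input gate. -/
def Circuit.Skew {K} (C : Circuit K) : Prop :=
  ∀ i : Fin C.size, ∀ j k : ℕ, C.gate i = .mul j k →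
    ∀ (hj : j < C.size) (hk : k < C.size),
      (C.gate ⟨j, hj⟩).IsInput ∨ (C.gate ⟨k, hk⟩).IsInput

/-- The class VP: families of polynomials computed by polynomial-size
multiplicatively disjoint circuits. -/
noncomputable def VP {K : Type} [Field K] (f : ℕ → MvPolynomial ℕ K) : Prop :=
  ∃ (C : ℕ → Circuit K) (P : Polynomial ℕ),
    ∀ n, (C n).MultDisjoint ∧ (C n).Computes (f n) ∧ (C n).size ≤ P.eval n

/-- Parse trees, recording at each node the index of the corresponding gate. -/
inductive ParseT where
  | leaf : ℕ → ParseT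
  | plus : ℕ → ParseT → ParseT
  | times : ℕ → ParseT → ParseT → ParseT

/-- Ordered rooted trees (shapes of parse trees); two parse trees are isomorphic
as ordered rooted trees iff they have the same shape. -/
inductive Shape where
  | lf : Shape
  | un : Shape → Shape
  | bin : Shape → Shape → Shape

def ParseT.shape : ParseT → Shape
  | .leaf _ => .lf
  | .plus _ t => .un t.shape
  | .times _ l r => .bin l.shape r.shape

/-- Number of vertices of a tree. -/
def Shape.size : Shape → ℕ
  | .lf => 1
  | .un t => t.size + 1
  | .bin l r => l.size + r.size + 1

/-- `C.ParseFrom i t`: `t` is a parse tree of the subcircuit of `C` rooted at gate `i`. -/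
inductive Circuit.ParseFrom {K} (C : Circuit K) : Fin C.size → ParseT → Prop where
  | leaf (i : Fin C.size) (h : (C.gate i).IsInput) : C.ParseFrom i (.leaf i.val)
  | plusL (i : Fin C.size) (j k : ℕ) (h : C.gate i = .add j k) (hj : j < C.size)
      (t : ParseT) (ht : C.ParseFrom ⟨j, hj⟩ t) : C.ParseFrom i (.plus i.val t)
  | plusR (i : Fin C.size) (j k : ℕ) (h : C.gate i = .add j k) (hk : k < C.size)
      (t : ParseT) (ht : C.ParseFrom ⟨k, hk⟩ t) : C.ParseFrom i (.plus i.val t)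
  | times (i : Fin C.size) (j k : ℕ) (h : C.gate i = .mul j k)
      (hj : j < C.size) (hk : k < C.size) (tl tr : ParseT)
      (hl : C.ParseFrom ⟨j, hj⟩ tl) (hr : C.ParseFrom ⟨k, hk⟩ tr) :
      C.ParseFrom i (.times i.val tl tr)

/-- `t` is a parse tree of the circuit `C`. -/
def Circuit.IsParseTree {K} (C : Circuit K) (t : ParseT) : Prop :=
  C.ParseFrom C.output t

end TC

/-!
Fix the middle coordinates: for a tensor of order `(g, mid, h)` and an index `e` of `mid`, the
entries `T[a, e, b]` form a `g × h` slice matrix, and the slice matrix of a contraction `G * H` at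
`(e_G, e_H)` is the product of the slice matrices of `G` at `e_G` and of `H` at `e_H`. Since every
input has dimension at least 2, so has every node, and an entry `F[a, e, b]` is the `b`-th entry of
`u ᵥ* M₁ ⋯ M_k`, where `u` is the `a`-th unit vector and the `Mᵢ` are slice matrices of the inputs.
Multiplying a row vector of computed gates by a `g × h` matrix of constants and variables takes
`h (3g - 1) ≤ 2 n³ g h` gates, each `×`-gate having an input gate as a child, and `g h` is at most
the size of that input. The two gates `0` and `1` needed for `u` are paid for by a `*`-node.
-/

theorem List.exists_eq_cons_append_singleton {α : Type*} {l : List α} (h : 2 ≤ l.length) :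
    ∃ a mid b, l = a :: (mid ++ [b]) := by
  match l, h with
  | a :: t, h =>
    have ht : t ≠ [] := by rintro rfl; simp at h
    exact ⟨a, t.dropLast, t.getLast ht, by rw [List.dropLast_append_getLast]⟩

namespace TC

namespace Idx

theorem cast_rfl {xs : List ℕ} (h : xs = xs) (e : Idx xs) : Idx.cast h e = e := rfl

theorem cast_cast {xs ys zs : List ℕ} (h₁ : xs = ys) (h₂ : ys = zs) (e : Idx xs) :
    Idx.cast h₂ (Idx.cast h₁ e) = Idx.cast (h₁.trans h₂) e := by
  subst h₁ h₂; rfl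

theorem cast_cons {n : ℕ} {xs ys : List ℕ} (h : xs = ys) (a : Fin n) (e : Idx xs) :
    Idx.cast (congrArg (n :: ·) h) ((a, e) : Idx (n :: xs)) = (a, Idx.cast h e) := by
  subst h; rfl

theorem split_app : ∀ (xs : List ℕ) {ys : List ℕ} (e : Idx xs) (f : Idx ys),
    Idx.split xs (Idx.app xs e f) = (e, f)
  | [], _, _, _ => rfl
  | _ :: xs, _, e, f => by simp only [Idx.app, Idx.split, split_app xs e.2 f]; rfl

theorem app_split : ∀ (xs : List ℕ) {ys : List ℕ} (e : Idx (xs ++ ys)),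
    Idx.app xs (Idx.split xs e).1 (Idx.split xs e).2 = e
  | [], _, _ => rfl
  | _ :: xs, _, e => by simp only [Idx.app, Idx.split, app_split xs e.2]; rfl

theorem exists_eq_app {xs ys : List ℕ} (e : Idx (xs ++ ys)) :
    ∃ (e₁ : Idx xs) (e₂ : Idx ys), e = Idx.app xs e₁ e₂ :=
  ⟨_, _, (app_split xs e).symm⟩

theorem app_assoc : ∀ (xs : List ℕ) {ys zs : List ℕ} (e : Idx xs) (f : Idx ys) (g : Idx zs),
    Idx.app (xs ++ ys) (Idx.app xs e f) g =
      Idx.cast (List.append_assoc xs ys zs).symm (Idx.app xs e (Idx.app ys f g))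
  | [], _, _, _, _, _ => rfl
  | _ :: xs, _, _, e, f, g => by
    simp only [List.cons_append, Idx.app, app_assoc xs e.2 f g]
    exact (cast_cons _ _ _).symm

theorem exists_eq_cast_slice {l mid : List ℕ} {g h : ℕ} (hl : l = g :: (mid ++ [h]))
    (e : Idx l) : ∃ (a : Fin g) (em : Idx mid) (b : Fin h),
      e = Idx.cast hl.symm
        ((a, Idx.app mid em ((b, PUnit.unit) : Idx [h])) : Idx (g :: (mid ++ [h]))) := by
  refine ⟨(Idx.cast hl e).1, (Idx.split mid (Idx.cast hl e).2).1,
    (Idx.split mid (Idx.cast hl e).2).2.1, ?_⟩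
  rw [show (((Idx.split mid (Idx.cast hl e).2).2.1, PUnit.unit) : Idx [h]) =
    (Idx.split mid (Idx.cast hl e).2).2 from rfl, Idx.app_split]
  exact (Idx.cast_cast hl hl.symm e).symm

theorem pos_prod : ∀ {l : List ℕ}, Idx l → 0 < l.prod
  | [], _ => Nat.one_pos
  | _ :: _, e => Nat.mul_pos e.1.pos (pos_prod e.2)

end Idx

section Contraction

variable {R : Type} {T G : Tens R}

theorem Tens.Compatible.exists_orders (h : T.Compatible G) :
    ∃ as c bs, T.order = as ++ [c] ∧ G.order = c :: bs := by
  obtain ⟨hT, hG, hlast⟩ := h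
  obtain ⟨c, bs, hbs⟩ := List.exists_cons_of_ne_nil hG
  refine ⟨T.order.dropLast, c, bs, ?_, hbs⟩
  rw [hbs, List.head?_cons, List.getLast?_eq_some_getLast hT, Option.some.injEq] at hlast
  rw [← hlast, List.dropLast_append_getLast]

theorem Tens.entry_congr {D D' : Tens R} (h : D = D') (x : Idx D.order) :
    D.entry x = D'.entry (Idx.cast (congrArg Tens.order h) x) := by
  subst h; rfl

variable [CommSemiring R] {as bs : List ℕ} {c : ℕ}

theorem Tens.contr_spec (hT : T.order = as ++ [c]) (hG : G.order = c :: bs) :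
    ∃ hO : (T.contr G).order = as ++ bs, ∀ (e₁ : Idx as) (e₂ : Idx bs),
      (T.contr G).entry (Idx.cast hO.symm (Idx.app as e₁ e₂)) =
        ∑ i : Fin c, T.entry (Idx.cast hT.symm (Idx.app as e₁ ((i, PUnit.unit) : Idx [c]))) *
          G.entry (Idx.cast hG.symm ((i, e₂) : Idx (c :: bs))) := by
  obtain ⟨To, Te⟩ := T
  obtain ⟨Go, Ge⟩ := G
  dsimp only at hT hG
  subst hT hG
  unfold Tens.contr
  split
  · rename_i c₀ c' ms hlast hG
    obtain ⟨rfl, rfl⟩ := List.cons.inj hG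
    obtain rfl : c = c₀ := by simpa using hlast
    refine ⟨by simp, fun e₁ e₂ => ?_⟩
    rw [Tens.entry_congr (dif_pos rfl), Idx.cast_cast]
    dsimp only
    -- `Tens.contr` splits indices along `(as ++ [c]).dropLast`, which is `as` only propositionally
    generalize_proofs p₁ p₂ p₃
    revert p₁ p₂ p₃
    generalize hA : (as ++ [c]).dropLast = as'
    rw [List.dropLast_concat] at hA
    subst hA
    intro p₁ p₂ p₃
    simp only [Idx.cast_rfl, Idx.split_app]
  · rename_i hfail
    exact (hfail c c bs List.getLast?_concat rfl).elim

/-- The `g × h` matrix `(a, b) ↦ T[a, e, b]`. -/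
def Tens.sliceMatrix (T : Tens R) {g h : ℕ} {mid : List ℕ} (hT : T.order = g :: (mid ++ [h]))
    (e : Idx mid) : Matrix (Fin g) (Fin h) R :=
  fun a b => T.entry (Idx.cast hT.symm (a, Idx.app mid e ((b, PUnit.unit) : Idx [h])))

theorem Tens.sliceMatrix_contr {g h : ℕ} {ms ns : List ℕ}
    (hT : T.order = g :: (ms ++ [c])) (hG : G.order = c :: (ns ++ [h]))
    (hTG : (T.contr G).order = g :: ((ms ++ ns) ++ [h])) (eT : Idx ms) (eG : Idx ns) :
    (T.contr G).sliceMatrix hTG (Idx.app ms eT eG) =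
      T.sliceMatrix hT eT * G.sliceMatrix hG eG := by
  obtain ⟨hO, hentry⟩ := Tens.contr_spec (as := g :: ms) hT hG
  ext a b
  have hidx :
      Idx.cast hTG.symm (a, Idx.app (ms ++ ns) (Idx.app ms eT eG) ((b, PUnit.unit) : Idx [h])) =
        Idx.cast hO.symm
          (Idx.app (g :: ms) (a, eT) (Idx.app ns eG ((b, PUnit.unit) : Idx [h]))) := by
    rw [Idx.app_assoc ms (zs := [h]) eT eG (b, PUnit.unit), ← Idx.cast_cons]
    exact Idx.cast_cast _ _ _
  exact (congrArg _ hidx).trans (hentry (a, eT) _)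

end Contraction

variable {K : Type}

def SkewProgram (l : List (Gate K)) : Prop :=
  (∀ i (hi : i < l.length), ∀ j ∈ l[i].children, j < i) ∧
  ∀ i (hi : i < l.length) j k, l[i] = .mul j k →
    ∀ (hj : j < l.length) (hk : k < l.length), l[j].IsInput ∨ l[k].IsInput

theorem SkewProgram.append_singleton {l : List (Gate K)} (hl : SkewProgram l) {g : Gate K}
    (hchildren : ∀ j ∈ g.children, j < l.length)
    (hskew : ∀ j k, g = .mul j k → ∀ (hj : j < l.length) (hk : k < l.length),
      l[j].IsInput ∨ l[k].IsInput) :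
    SkewProgram (l ++ [g]) := by
  constructor
  · intro i hi j hj
    rcases Nat.lt_or_ge i l.length with hil | hil
    · rw [List.getElem_append_left hil] at hj
      exact hl.1 i hil j hj
    · obtain rfl : i = l.length := by simp at hi; omega
      simp only [List.getElem_concat_length] at hj
      exact hchildren j hj
  · intro i hi j k hmul hj hk
    rcases Nat.lt_or_ge i l.length with hil | hil
    · rw [List.getElem_append_left hil] at hmul
      have hjk := hl.1 i hil
      rw [hmul] at hjk
      have hj' : j < l.length := (hjk j (by simp [Gate.children])).trans hil
      have hk' : k < l.length := (hjk k (by simp [Gate.children])).trans hil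
      rw [List.getElem_append_left hj', List.getElem_append_left hk']
      exact hl.2 i hil j k hmul hj' hk'
    · obtain rfl : i = l.length := by simp at hi; omega
      simp only [List.getElem_concat_length] at hmul
      subst hmul
      have hj' : j < l.length := hchildren j (by simp [Gate.children])
      have hk' : k < l.length := hchildren k (by simp [Gate.children])
      rw [List.getElem_append_left hj', List.getElem_append_left hk']
      exact hskew j k rfl hj' hk'

theorem SkewProgram.nil : SkewProgram ([] : List (Gate K)) :=
  ⟨fun _ hi => absurd hi (Nat.not_lt_zero _), fun _ hi => absurd hi (Nat.not_lt_zero _)⟩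

theorem SkewProgram.append_input {l : List (Gate K)} (hl : SkewProgram l) {g : Gate K}
    (hg : g.IsInput) : SkewProgram (l ++ [g]) := by
  refine hl.append_singleton ?_ ?_ <;> cases g <;> simp_all [Gate.IsInput, Gate.children]

theorem SkewProgram.append_add {l : List (Gate K)} (hl : SkewProgram l) {j k : ℕ}
    (hj : j < l.length) (hk : k < l.length) : SkewProgram (l ++ [.add j k]) :=
  hl.append_singleton (by simp [Gate.children, hj, hk]) (by simp)

theorem SkewProgram.append_mul {l : List (Gate K)} (hl : SkewProgram l) {j k : ℕ}
    (hj : j < l.length) (hk : k < l.length) (hinput : l[k].IsInput) :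
    SkewProgram (l ++ [.mul j k]) :=
  hl.append_singleton (by simp [Gate.children, hj, hk])
    (by rintro _ _ ⟨⟩ _ _; exact Or.inr hinput)

def Circuit.ofGates (l : List (Gate K)) (hl : SkewProgram l) (out : Fin l.length) :
    Circuit K where
  size := l.length
  gate i := l[i]
  output := out
  wf i := hl.1 i i.isLt

theorem Circuit.ofGates_skew (l : List (Gate K)) (hl : SkewProgram l) (out : Fin l.length) :
    (Circuit.ofGates l hl out).Skew :=
  fun i j k hmul hj hk => hl.2 i i.isLt j k hmul hj hk

def Entry.gate : Entry K → Gate K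
  | .const c => .const c
  | .var n => .var n

theorem Entry.gate_isInput (t : Entry K) : t.gate.IsInput := by
  cases t <;> trivial

def SForm.inputSize : SForm K → ℕ
  | .input T => T.tsize
  | .contr F G => F.inputSize + G.inputSize

theorem SForm.inputSize_le_size : ∀ F : SForm K, F.inputSize ≤ F.size
  | .input _ => le_rfl
  | .contr F G => by
    have := F.inputSize_le_size
    have := G.inputSize_le_size
    simp only [SForm.inputSize, SForm.size]
    omega

variable [Field K]

noncomputable def Gate.value (v : ℕ → MvPolynomial ℕ K) : Gate K → MvPolynomial ℕ K
  | .const c => MvPolynomial.C c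
  | .var n => MvPolynomial.X n
  | .add j k => v j + v k
  | .mul j k => v j * v k

theorem Gate.value_congr {v w : ℕ → MvPolynomial ℕ K} {g : Gate K}
    (h : ∀ j ∈ g.children, v j = w j) : g.value v = g.value w := by
  cases g <;> simp_all [Gate.value, Gate.children]

/-- The gate values of a straight-line program; a reference to a gate that does not precede the
current one reads `0`. -/
noncomputable def evalGates (l : List (Gate K)) : List (MvPolynomial ℕ K) :=
  l.foldl (fun vs g => vs ++ [g.value (vs.getD · 0)]) []

noncomputable def evalGate (l : List (Gate K)) (i : ℕ) : MvPolynomial ℕ K :=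
  (evalGates l).getD i 0

@[simp]
theorem evalGates_append_singleton (l : List (Gate K)) (g : Gate K) :
    evalGates (l ++ [g]) = evalGates l ++ [g.value (evalGate l)] := by
  rw [evalGates, List.foldl_append]
  rfl

@[simp]
theorem length_evalGates (l : List (Gate K)) : (evalGates l).length = l.length := by
  induction l using List.reverseRecOn with
  | nil => rfl
  | append_singleton l g ih => simp [ih]

theorem evalGates_isPrefix {l l' : List (Gate K)} (h : l <+: l') :
    evalGates l <+: evalGates l' := by
  obtain ⟨m, rfl⟩ := h
  induction m using List.reverseRecOn with
  | nil => simp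
  | append_singleton m g ih =>
    rw [← List.append_assoc, evalGates_append_singleton]
    exact ih.trans (List.prefix_append _ _)

theorem evalGate_of_isPrefix {l l' : List (Gate K)} (h : l <+: l') {i : ℕ}
    (hi : i < l.length) : evalGate l' i = evalGate l i := by
  have hi' : i < (evalGates l).length := by simpa using hi
  rw [evalGate, evalGate, List.getD_eq_getElem _ _ hi',
    List.getD_eq_getElem _ _ (lt_of_lt_of_le hi' (evalGates_isPrefix h).length_le)]
  exact ((evalGates_isPrefix h).getElem hi').symm

@[simp]
theorem evalGate_append_singleton_length (l : List (Gate K)) (g : Gate K) :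
    evalGate (l ++ [g]) l.length = g.value (evalGate l) := by
  simp [evalGate]

theorem evalGate_append_singleton_of_lt (l : List (Gate K)) (g : Gate K) {i : ℕ}
    (hi : i < l.length) : evalGate (l ++ [g]) i = evalGate l i :=
  evalGate_of_isPrefix (List.prefix_append _ _) hi

theorem SkewProgram.evalGate_eq {l : List (Gate K)} (hl : SkewProgram l) {i : ℕ}
    (hi : i < l.length) : evalGate l i = l[i].value (evalGate l) := by
  have htake : l.take (i + 1) = l.take i ++ [l[i]] := List.take_succ_eq_append_getElem hi
  have hlen : (l.take i).length = i := List.length_take_of_le hi.le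
  calc evalGate l i = evalGate (l.take (i + 1)) i :=
        evalGate_of_isPrefix (List.take_prefix _ _) (by simp [hi])
    _ = l[i].value (evalGate (l.take i)) := by
        rw [htake, ← evalGate_append_singleton_length, hlen]
    _ = l[i].value (evalGate l) := Gate.value_congr fun j hj =>
        (evalGate_of_isPrefix (List.take_prefix _ _) (by rw [hlen]; exact hl.1 i hi j hj)).symm

theorem Circuit.ofGates_eval (l : List (Gate K)) (hl : SkewProgram l) (out : Fin l.length)
    (i : Fin (Circuit.ofGates l hl out).size) :
    (Circuit.ofGates l hl out).eval i = evalGate l i := by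
  obtain ⟨i, hi⟩ := i
  induction i using Nat.strong_induction_on with
  | _ i ih =>
    have hchildren := hl.1 i hi
    rw [Circuit.eval.eq_1, hl.evalGate_eq hi]
    split <;> rename_i hgate <;> have hgate' : l[i] = _ := hgate <;> rw [hgate'] at hchildren ⊢
    · rfl
    · rfl
    all_goals
      rename_i j k
      dsimp only
      rw [ih j (hchildren j (by simp [Gate.children])),
        ih k (hchildren k (by simp [Gate.children]))]
      rfl

@[simp]
theorem Entry.value_gate (t : Entry K) (v : ℕ → MvPolynomial ℕ K) :
    t.gate.value v = t.toPoly := by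
  cases t <;> rfl

theorem SkewProgram.exists_mul_entry {l : List (Gate K)} (hl : SkewProgram l) {j : ℕ}
    (hj : j < l.length) (t : Entry K) :
    ∃ l', l <+: l' ∧ SkewProgram l' ∧ l'.length = l.length + 2 ∧
      evalGate l' (l.length + 1) = evalGate l j * t.toPoly := by
  refine ⟨l ++ [t.gate] ++ [.mul j l.length], ?_, ?_, by simp, ?_⟩
  · simp
  · exact (hl.append_input t.gate_isInput).append_mul (by simp; omega) (by simp)
      (by simpa using t.gate_isInput)
  · have hlen : (l ++ [t.gate]).length = l.length + 1 := by simp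
    rw [← hlen, evalGate_append_singleton_length, Gate.value,
      evalGate_append_singleton_of_lt _ _ hj, evalGate_append_singleton_length, Entry.value_gate]

-- The first product needs no `+`-gate: `3g - 1` rather than `3g` gates per column is what makes
-- the bound of the theorem hold when `n = 1`.
theorem SkewProgram.exists_sum_mul_entry {l : List (Gate K)} (hl : SkewProgram l) :
    ∀ (g : ℕ) (x : Fin (g + 1) → ℕ), (∀ a, x a < l.length) → ∀ p : Fin (g + 1) → Entry K,
      ∃ l', l <+: l' ∧ SkewProgram l' ∧ l'.length ≤ l.length + (3 * g + 2) ∧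
        ∃ out < l'.length, evalGate l' out = ∑ a, evalGate l (x a) * (p a).toPoly
  | 0, x, hx, p => by
    obtain ⟨l', hpre, hl', hlen, hval⟩ := hl.exists_mul_entry (hx 0) (p 0)
    exact ⟨l', hpre, hl', by omega, l.length + 1, by omega, by simpa using hval⟩
  | g + 1, x, hx, p => by
    obtain ⟨l₁, hpre₁, hl₁, hlen₁, out, hout, hval⟩ :=
      hl.exists_sum_mul_entry g (fun a => x a.castSucc) (fun a => hx _) (fun a => p a.castSucc)
    have hxl : x (Fin.last _) < l₁.length := (hx _).trans_le hpre₁.length_le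
    obtain ⟨l₂, hpre₂, hl₂, hlen₂, hval₂⟩ := hl₁.exists_mul_entry hxl (p (Fin.last _))
    refine ⟨l₂ ++ [.add out (l₁.length + 1)], hpre₁.trans (hpre₂.trans (List.prefix_append _ _)),
      hl₂.append_add (by omega) (by omega), by simp; omega, l₂.length, by simp, ?_⟩
    rw [evalGate_append_singleton_length, Gate.value, hval₂, evalGate_of_isPrefix hpre₂ hout,
      hval, evalGate_of_isPrefix hpre₁ (hx _)]
    exact (Fin.sum_univ_castSucc (fun a => evalGate l (x a) * (p a).toPoly)).symm

theorem SkewProgram.exists_dotProduct {l : List (Gate K)} (hl : SkewProgram l) {z : ℕ}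
    (hz : z < l.length) (hz0 : evalGate l z = 0) {g : ℕ} (x : Fin g → ℕ)
    (hx : ∀ a, x a < l.length) (p : Fin g → Entry K) :
    ∃ l', l <+: l' ∧ SkewProgram l' ∧ l'.length ≤ l.length + (3 * g - 1) ∧
      ∃ out < l'.length,
        evalGate l' out = (fun a => evalGate l (x a)) ⬝ᵥ (fun a => (p a).toPoly) := by
  cases g with
  | zero => exact ⟨l, List.prefix_refl l, hl, by omega, z, hz, by simp [hz0]⟩
  | succ g =>
    obtain ⟨l', hpre, hl', hlen, out, hout, hval⟩ := hl.exists_sum_mul_entry g x hx p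
    exact ⟨l', hpre, hl', by omega, out, hout, hval⟩

/-- Every skew program with gates `x a` and a gate computing `0` (for empty sums) extends, by at
most `c` gates, to one with gates `y b` computing the row vector `(x a)ₐ ᵥ* M`. -/
def HasSkewVecMul {g h : ℕ} (M : Matrix (Fin g) (Fin h) (MvPolynomial ℕ K)) (c : ℕ) : Prop :=
  ∀ l : List (Gate K), SkewProgram l → ∀ z < l.length, evalGate l z = 0 →
    ∀ x : Fin g → ℕ, (∀ a, x a < l.length) →
    ∃ l', l <+: l' ∧ SkewProgram l' ∧ l'.length ≤ l.length + c ∧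
      ∃ y : Fin h → ℕ, (∀ b, y b < l'.length) ∧
        (fun b => evalGate l' (y b)) = Matrix.vecMul (fun a => evalGate l (x a)) M

namespace HasSkewVecMul

variable {g h k : ℕ} {M : Matrix (Fin g) (Fin h) (MvPolynomial ℕ K)} {c d : ℕ}

theorem mono (hM : HasSkewVecMul M c) (hcd : c ≤ d) : HasSkewVecMul M d := by
  intro l hl z hz hz0 x hx
  obtain ⟨l', hpre, hl', hlen, rest⟩ := hM l hl z hz hz0 x hx
  exact ⟨l', hpre, hl', by omega, rest⟩

theorem mul {N : Matrix (Fin h) (Fin k) (MvPolynomial ℕ K)} (hM : HasSkewVecMul M c)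
    (hN : HasSkewVecMul N d) : HasSkewVecMul (M * N) (c + d) := by
  intro l hl z hz hz0 x hx
  obtain ⟨l₁, hpre₁, hl₁, hlen₁, y₁, hy₁, hval₁⟩ := hM l hl z hz hz0 x hx
  obtain ⟨l₂, hpre₂, hl₂, hlen₂, y₂, hy₂, hval₂⟩ :=
    hN l₁ hl₁ z (hz.trans_le hpre₁.length_le) (by rw [evalGate_of_isPrefix hpre₁ hz, hz0]) y₁ hy₁
  refine ⟨l₂, hpre₁.trans hpre₂, hl₂, by omega, y₂, hy₂, ?_⟩
  rw [hval₂, hval₁, Matrix.vecMul_vecMul]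

end HasSkewVecMul

theorem hasSkewVecMul_map_toPoly {g : ℕ} :
    ∀ {h : ℕ} (P : Matrix (Fin g) (Fin h) (Entry K)),
      HasSkewVecMul (P.map Entry.toPoly) (h * (3 * g - 1))
  | 0, _ => fun l hl _ _ _ _ _ =>
    ⟨l, List.prefix_refl l, hl, by omega, Fin.elim0, fun b => b.elim0, funext fun b => b.elim0⟩
  | h + 1, P => by
    intro l hl z hz hz0 x hx
    obtain ⟨l₁, hpre₁, hl₁, hlen₁, out, hout, hval⟩ :=
      hl.exists_dotProduct hz hz0 x hx (fun a => P a 0)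
    obtain ⟨l₂, hpre₂, hl₂, hlen₂, y, hy, hvaly⟩ :=
      hasSkewVecMul_map_toPoly (fun a b => P a b.succ) l₁ hl₁ z (hz.trans_le hpre₁.length_le)
        (by rw [evalGate_of_isPrefix hpre₁ hz, hz0]) x (fun a => (hx a).trans_le hpre₁.length_le)
    refine ⟨l₂, hpre₁.trans hpre₂, hl₂, ?_, Fin.cons out y,
      Fin.cases (hout.trans_le hpre₂.length_le) hy, ?_⟩
    · rw [Nat.succ_mul]; omega
    · funext b
      cases b using Fin.cases with
      | zero => rw [Fin.cons_zero, evalGate_of_isPrefix hpre₂ hout, hval]; rfl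
      | succ b =>
        rw [Fin.cons_succ, congrFun hvaly b]
        simp only [Matrix.vecMul, dotProduct, evalGate_of_isPrefix hpre₁ (hx _)]
        rfl

theorem three_mul_sub_one_le {g n : ℕ} (hg : g ≤ n) : 3 * g - 1 ≤ 2 * n ^ 3 * g := by
  rcases g with _ | g
  · simp
  · have hn : g + 1 ≤ n ^ 3 := hg.trans (Nat.le_self_pow (by norm_num) n)
    have : 3 * (g + 1) - 1 = 3 * g + 2 := by omega
    rw [this]
    nlinarith

theorem SForm.two_le_length_order :
    ∀ F : SForm K, F.WF → F.InputsDimGE2 → 2 ≤ F.eval.order.length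
  | .input _, _, h2 => h2
  | .contr G H, ⟨hWG, hWH, hcomp⟩, ⟨h2G, h2H⟩ => by
    have hG := G.two_le_length_order hWG h2G
    have hH := H.two_le_length_order hWH h2H
    obtain ⟨as, c, bs, hGo, hHo⟩ := hcomp.exists_orders
    obtain ⟨hO, -⟩ := Tens.contr_spec hGo hHo
    show 2 ≤ (G.eval.contr H.eval).order.length
    rw [hGo] at hG
    rw [hHo] at hH
    simp only [hO, List.length_append, List.length_cons, List.length_nil] at hG hH ⊢
    omega

theorem SForm.le_inputMaxOrder_of_mem :
    ∀ F : SForm K, F.WF → ∀ k ∈ F.eval.order, k ≤ F.inputMaxOrder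
  | .input _, _, _, hk => List.le_max_of_le' 0 hk le_rfl
  | .contr G H, ⟨hWG, hWH, hcomp⟩, k, hk => by
    obtain ⟨as, c, bs, hGo, hHo⟩ := hcomp.exists_orders
    obtain ⟨hO, -⟩ := Tens.contr_spec hGo hHo
    change k ∈ (G.eval.contr H.eval).order at hk
    rw [hO, List.mem_append] at hk
    rcases hk with hk | hk
    · exact (G.le_inputMaxOrder_of_mem hWG k (by simp [hGo, hk])).trans (le_max_left _ _)
    · exact (H.le_inputMaxOrder_of_mem hWH k (by simp [hHo, hk])).trans (le_max_right _ _)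

theorem SForm.hasSkewVecMul_sliceMatrix {n : ℕ} :
    ∀ F : SForm K, F.WF → F.InputsDimGE2 → F.inputMaxOrder ≤ n →
      ∀ {g h : ℕ} {mid : List ℕ} (hF : F.eval.order = g :: (mid ++ [h])) (e : Idx mid),
        HasSkewVecMul (F.eval.sliceMatrix hF e) (2 * n ^ 3 * F.inputSize)
  | .input T, _, _, hn, g, h, mid, hF, e => by
    have hg : g ≤ n :=
      ((SForm.input T).le_inputMaxOrder_of_mem trivial g (by simp [hF])).trans hn
    have hsize : (SForm.input T : SForm K).inputSize = g * (mid.prod * h) := by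
      simp [SForm.inputSize, Tens.tsize, show T.order = _ from hF]
    refine (hasSkewVecMul_map_toPoly (T.sliceMatrix hF e)).mono ?_
    calc h * (3 * g - 1) ≤ h * (2 * n ^ 3 * g) :=
          Nat.mul_le_mul_left _ (three_mul_sub_one_le hg)
      _ ≤ h * (2 * n ^ 3 * g) * mid.prod := Nat.le_mul_of_pos_right _ (Idx.pos_prod e)
      _ = 2 * n ^ 3 * (SForm.input T).inputSize := by rw [hsize]; ring
  | .contr G H, ⟨hWG, hWH, hcomp⟩, ⟨h2G, h2H⟩, hn, g, h, mid, hF, e => by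
    obtain ⟨g', ms, c, hGo⟩ :=
      List.exists_eq_cons_append_singleton (G.two_le_length_order hWG h2G)
    obtain ⟨c', ns, h', hHo⟩ :=
      List.exists_eq_cons_append_singleton (H.two_le_length_order hWH h2H)
    obtain rfl : c = c' := by
      have hlast := hcomp.2.2
      rw [hGo, hHo, ← List.cons_append, List.getLast?_concat, List.head?_cons] at hlast
      exact Option.some.inj hlast
    obtain ⟨hO, -⟩ := Tens.contr_spec (as := g' :: ms) hGo hHo
    have hO' : (SForm.contr G H).eval.order = g' :: ((ms ++ ns) ++ [h']) := hO.trans (by simp)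
    obtain ⟨rfl, hmid⟩ := List.cons_eq_cons.1 (hF.symm.trans hO')
    obtain ⟨rfl, hh⟩ := List.append_inj' hmid rfl
    obtain rfl := List.singleton_inj.1 hh
    obtain ⟨eG, eH, rfl⟩ := Idx.exists_eq_app e
    have hslice : (SForm.contr G H).eval.sliceMatrix hF (Idx.app ms eG eH) =
        G.eval.sliceMatrix hGo eG * H.eval.sliceMatrix hHo eH :=
      Tens.sliceMatrix_contr hGo hHo hF eG eH
    rw [hslice, SForm.inputSize, mul_add]
    exact (G.hasSkewVecMul_sliceMatrix hWG h2G (le_of_max_le_left hn) hGo eG).mul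
      (H.hasSkewVecMul_sliceMatrix hWH h2H (le_of_max_le_right hn) hHo eH)

theorem SkewProgram.exists_circuit {l : List (Gate K)} (hl : SkewProgram l) {out : ℕ}
    (hout : out < l.length) :
    ∃ C : Circuit K, C.Skew ∧ C.size = l.length ∧ C.Computes (evalGate l out) :=
  ⟨Circuit.ofGates l hl ⟨out, hout⟩, Circuit.ofGates_skew l hl _, rfl,
    Circuit.ofGates_eval l hl _ _⟩

theorem HasSkewVecMul.exists_skewProgram_eq_apply {g h c : ℕ}
    {M : Matrix (Fin g) (Fin h) (MvPolynomial ℕ K)} (hM : HasSkewVecMul M c) (a : Fin g)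
    (b : Fin h) : ∃ l : List (Gate K), SkewProgram l ∧ l.length ≤ c + 2 ∧
      ∃ out < l.length, evalGate l out = M a b := by
  let l₀ : List (Gate K) := [.const 0, .const 1]
  have hl₀ : SkewProgram l₀ :=
    (SkewProgram.nil.append_input (g := .const 0) trivial).append_input (g := .const 1) trivial
  have hval₀ : evalGate l₀ 0 = 0 := by simp [l₀, evalGate, evalGates, Gate.value]
  have hval₁ : evalGate l₀ 1 = 1 := by simp [l₀, evalGate, evalGates, Gate.value]
  obtain ⟨l, -, hl, hlen, y, hy, hval⟩ := hM l₀ hl₀ 0 (by simp [l₀]) hval₀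
    (fun a' => if a' = a then 1 else 0) (fun a' => by split <;> simp [l₀])
  have hsingle : (fun a' => evalGate l₀ (if a' = a then 1 else 0)) = Pi.single a 1 := by
    funext a'
    by_cases ha : a' = a <;> simp [ha, hval₀, hval₁]
  refine ⟨l, hl, hlen.trans_eq (by simp [l₀, add_comm]), y b, hy b, ?_⟩
  rw [congrFun hval b, hsingle, Matrix.single_one_vecMul]
  rfl

end TC

open TC

/-- every entry of the tensor computed by a `{*}`-formula all of
whose input tensors have dimension at least 2 is computed by a skew circuit of
size at most `2 * n^3 * |F|`. -/
theorem star_formula_no_vectors_skew {K : Type} [Field K] (F : SForm K)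
    (hWF : F.WF) (h2 : F.InputsDimGE2) :
    ∀ e : Idx F.eval.order, ∃ C : Circuit K,
      C.Skew ∧ C.size ≤ 2 * F.inputMaxOrder ^ 3 * F.size ∧
      C.Computes (F.eval.entry e) := by
  intro e
  obtain ⟨g, mid, h, hF⟩ := List.exists_eq_cons_append_singleton (F.two_le_length_order hWF h2)
  obtain ⟨a, em, b, rfl⟩ := Idx.exists_eq_cast_slice hF e
  have hn : 0 < F.inputMaxOrder ^ 3 :=
    pow_pos (a.pos.trans_le (F.le_inputMaxOrder_of_mem hWF g (by simp [hF]))) 3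
  suffices ∃ l : List (Gate K), SkewProgram l ∧ l.length ≤ 2 * F.inputMaxOrder ^ 3 * F.size ∧
      ∃ out < l.length, evalGate l out = F.eval.sliceMatrix hF em a b by
    obtain ⟨l, hl, hlen, out, hout, hval⟩ := this
    obtain ⟨C, hC, hsize, hcomp⟩ := hl.exists_circuit hout
    exact ⟨C, hC, hsize ▸ hlen, hcomp.trans hval⟩
  cases F with
  | input T =>
    refine ⟨[(T.entry _).gate], SkewProgram.nil.append_input (Entry.gate_isInput _), ?_, 0,
      Nat.one_pos, by simp [evalGate, evalGates]; rfl⟩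
    have : 0 < T.order.prod :=
      Idx.pos_prod (Idx.cast hF.symm (a, Idx.app mid em ((b, PUnit.unit) : Idx [h])))
    simp only [List.length_singleton, SForm.size, Tens.tsize]
    nlinarith
  | contr G H =>
    obtain ⟨l, hl, hlen, rest⟩ := ((SForm.contr G H).hasSkewVecMul_sliceMatrix hWF h2 le_rfl hF
      em).exists_skewProgram_eq_apply a b
    refine ⟨l, hl, ?_, rest⟩
    simp only [SForm.inputSize, SForm.size] at hlen ⊢
    nlinarith [G.inputSize_le_size, H.inputSize_le_size]
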